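/- Let $p \ge 2$, let $A$ be a nonnegative real $n \times n$ matrix, and let $x, y \in \mathbb{R}^n$ be nonnegative vectors. Define $z \in \mathbb{R}^n$ by $z_i = \left( \frac{x_i^p + y_i^p}{2} \right)^{1/p}$. Then $\sum_{i,j} a_{i,j} (x_i y_j + y_i x_j) \le 2 \sum_{i,j} a_{i,j} z_i z_j$; moreover, if $|x|_p = |y|_p = 1$ then $|z|_p = 1$. -/

import Mathlib

open Finset

/-- The `ℓ^p` norm of a vector in `ℝ^n`. -/
noncomputable def lpNorm {n : ℕ} (p : ℝ) (x : Fin n → ℝ) : ℝ :=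
  (∑ i, |x i| ^ p) ^ (1 / p)

/-! By Cauchy–Schwarz in `ℝ²`, `a d + b c ≤ 2 M₂(a, b) M₂(c, d)`, where
`M_r(a, b) = ((aʳ + bʳ) / 2)^{1/r}` is the two-point power mean, and `M₂ ≤ M_p` for
`p ≥ 2` by convexity of `t ↦ t^{p/2}`. Summing against the nonnegative weights `a_{ij}`
gives the bilinear inequality. Since `z_iᵖ = (x_iᵖ + y_iᵖ) / 2`, also
`|z|_pᵖ = (|x|_pᵖ + |y|_pᵖ) / 2`. -/

noncomputable def powerMean (p a b : ℝ) : ℝ := ((a ^ p + b ^ p) / 2) ^ (1 / p)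

section PowerMean

variable {p r a b : ℝ}

lemma powerMean_nonneg (ha : 0 ≤ a) (hb : 0 ≤ b) : 0 ≤ powerMean p a b := by
  unfold powerMean; positivity

lemma powerMean_rpow (ha : 0 ≤ a) (hb : 0 ≤ b) (hp : p ≠ 0) :
    powerMean p a b ^ p = (a ^ p + b ^ p) / 2 := by
  rw [powerMean, one_div, Real.rpow_inv_rpow (by positivity) hp]

lemma powerMean_le_powerMean (ha : 0 ≤ a) (hb : 0 ≤ b) (hr : 0 < r) (hrp : r ≤ p) :
    powerMean r a b ≤ powerMean p a b := by
  have hp : 0 < p := hr.trans_le hrp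
  have hM := powerMean_nonneg (p := r) ha hb
  refine (Real.rpow_le_rpow_iff hM (powerMean_nonneg ha hb) hp).1 ?_
  have hconvex := (convexOn_rpow ((one_le_div hr).2 hrp)).2
    (Set.mem_Ici.2 (by positivity : 0 ≤ a ^ r)) (Set.mem_Ici.2 (by positivity : 0 ≤ b ^ r))
    (by norm_num : (0 : ℝ) ≤ 1 / 2) (by norm_num : (0 : ℝ) ≤ 1 / 2) (add_halves 1)
  simp only [smul_eq_mul, one_div, inv_mul_eq_div, ← add_div] at hconvex
  calc powerMean r a b ^ p = (powerMean r a b ^ r) ^ (p / r) := by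
        rw [← Real.rpow_mul hM, mul_div_cancel₀ p hr.ne']
    _ = ((a ^ r + b ^ r) / 2) ^ (p / r) := by rw [powerMean_rpow ha hb hr.ne']
    _ ≤ ((a ^ r) ^ (p / r) + (b ^ r) ^ (p / r)) / 2 := hconvex
    _ = (a ^ p + b ^ p) / 2 := by
        rw [← Real.rpow_mul ha, ← Real.rpow_mul hb, mul_div_cancel₀ p hr.ne']
    _ = powerMean p a b ^ p := (powerMean_rpow ha hb hp.ne').symm

lemma half_add_sq_le_powerMean_sq (ha : 0 ≤ a) (hb : 0 ≤ b) (hp : 2 ≤ p) :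
    (a ^ 2 + b ^ 2) / 2 ≤ powerMean p a b ^ 2 := by
  have hsq := powerMean_rpow (p := 2) ha hb two_ne_zero
  simp only [Real.rpow_two] at hsq
  rw [← hsq]
  exact pow_le_pow_left₀ (powerMean_nonneg ha hb) (powerMean_le_powerMean ha hb two_pos hp) 2

lemma mul_add_mul_le_two_mul_powerMean_mul_powerMean {c d : ℝ} (ha : 0 ≤ a) (hb : 0 ≤ b)
    (hc : 0 ≤ c) (hd : 0 ≤ d) (hp : 2 ≤ p) :
    a * d + b * c ≤ 2 * powerMean p a b * powerMean p c d := by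
  have hM := powerMean_nonneg (p := p) ha hb
  have hM' := powerMean_nonneg (p := p) hc hd
  refine (pow_le_pow_iff_left₀ (by positivity) (by positivity) two_ne_zero).1 ?_
  calc (a * d + b * c) ^ 2 ≤ (a ^ 2 + b ^ 2) * (c ^ 2 + d ^ 2) := by
        nlinarith [sq_nonneg (a * c - b * d)]
    _ = 4 * ((a ^ 2 + b ^ 2) / 2) * ((c ^ 2 + d ^ 2) / 2) := by ring
    _ ≤ 4 * powerMean p a b ^ 2 * powerMean p c d ^ 2 := by
        gcongr
        exacts [half_add_sq_le_powerMean_sq ha hb hp, half_add_sq_le_powerMean_sq hc hd hp]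
    _ = (2 * powerMean p a b * powerMean p c d) ^ 2 := by ring

end PowerMean

lemma sum_mul_add_mul_le_two_mul_sum_powerMean {ι : Type*} [Fintype ι] {p : ℝ} (hp : 2 ≤ p)
    (A : ι → ι → ℝ) (hA : ∀ i j, 0 ≤ A i j) (x y : ι → ℝ) (hx : ∀ i, 0 ≤ x i)
    (hy : ∀ i, 0 ≤ y i) :
    ∑ i, ∑ j, A i j * (x i * y j + y i * x j) ≤
      2 * ∑ i, ∑ j, A i j * powerMean p (x i) (y i) * powerMean p (x j) (y j) := by
  simp only [mul_sum]
  refine sum_le_sum fun i _ => sum_le_sum fun j _ => ?_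
  calc A i j * (x i * y j + y i * x j)
      ≤ A i j * (2 * powerMean p (x i) (y i) * powerMean p (x j) (y j)) :=
        mul_le_mul_of_nonneg_left
          (mul_add_mul_le_two_mul_powerMean_mul_powerMean (hx i) (hy i) (hx j) (hy j) hp) (hA i j)
    _ = 2 * (A i j * powerMean p (x i) (y i) * powerMean p (x j) (y j)) := by ring

lemma lpNorm_eq_one_iff {n : ℕ} {p : ℝ} (hp : p ≠ 0) (x : Fin n → ℝ) :
    lpNorm p x = 1 ↔ ∑ i, |x i| ^ p = 1 := by
  rw [lpNorm]
  simpa only [Real.one_rpow] using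
    Real.rpow_left_inj (by positivity) zero_le_one (one_div_ne_zero hp)

lemma sum_abs_powerMean_rpow {ι : Type*} [Fintype ι] {p : ℝ} (hp : p ≠ 0) (x y : ι → ℝ)
    (hx : ∀ i, 0 ≤ x i) (hy : ∀ i, 0 ≤ y i) :
    ∑ i, |powerMean p (x i) (y i)| ^ p = (∑ i, |x i| ^ p + ∑ i, |y i| ^ p) / 2 := by
  simp only [abs_of_nonneg (powerMean_nonneg (hx _) (hy _)), abs_of_nonneg (hx _),
    abs_of_nonneg (hy _), powerMean_rpow (hx _) (hy _) hp, ← sum_add_distrib, sum_div]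

/-- Let `p ≥ 2`, `A` a nonnegative `n × n` matrix, `x, y` nonnegative vectors, and
`z_i = ((x_iᵖ + y_iᵖ)/2)^{1/p}`. Then `∑ a_{ij} (x_i y_j + y_i x_j) ≤ 2 ∑ a_{ij} z_i z_j`;
moreover if `|x|_p = |y|_p = 1` then `|z|_p = 1`. -/
theorem symmetrization_ineq {n : ℕ} {p : ℝ} (hp : 2 ≤ p)
    (A : Matrix (Fin n) (Fin n) ℝ) (hA : ∀ i j, 0 ≤ A i j)
    (x y : Fin n → ℝ) (hx : ∀ i, 0 ≤ x i) (hy : ∀ i, 0 ≤ y i)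
    (z : Fin n → ℝ) (hz : ∀ i, z i = ((x i ^ p + y i ^ p) / 2) ^ (1 / p)) :
    (∑ i, ∑ j, A i j * (x i * y j + y i * x j) ≤ 2 * ∑ i, ∑ j, A i j * z i * z j) ∧
    (lpNorm p x = 1 → lpNorm p y = 1 → lpNorm p z = 1) := by
  obtain rfl : z = fun i => powerMean p (x i) (y i) := funext hz
  have hp0 : p ≠ 0 := by positivity
  refine ⟨sum_mul_add_mul_le_two_mul_sum_powerMean hp A hA x y hx hy, fun hxn hyn => ?_⟩
  rw [lpNorm_eq_one_iff hp0] at hxn hyn ⊢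
  rw [sum_abs_powerMean_rpow hp0 x y hx hy, hxn, hyn]
  norm_num
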